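/- Assume f \in C^1([0,\infty)) satisfies, for some \gamma > 0: f(u) < 0 for u \in (0,\gamma), f(u) > 0 for u > \gamma, and f'(u) - (p-1)f(u)/u > 0 for u > \gamma. Let u be a positive solution of the one-dimensional problem (1), let x_0 \in (0,1) satisfy u(x_0) = \gamma, and let w be a solution of the linearized problem (4) with w(x) > 0 for x \in (-1,1). Then (p-1)\,w(x_0)\,\varphi_p(u'(x_0)) - u(x_0)\,w'(x_0)\,\varphi_p'(u'(x_0)) > 0; in particular, w'(x_0) < 0. -/

import Mathlib

open Set

/-- `φ_p(t) = t |t|^{p-2}` (real exponent), with `φ_p(0)=0`. -/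
noncomputable def phi (p t : ℝ) : ℝ := t * |t| ^ (p - 2)

/-- `φ_p'(t) = (p-1) |t|^{p-2}`. -/
noncomputable def phi' (p t : ℝ) : ℝ := (p - 1) * |t| ^ (p - 2)

/-- The derivative of a function on `[-1,1]` (one-sided at the endpoints). -/
noncomputable def du (u : ℝ → ℝ) : ℝ → ℝ := derivWithin u (Set.Icc (-1) 1)

/-- A positive (classical) solution of the one-dimensional problem (1):
`(φ_p(u'))' + λ f(u) = 0` on `(-1,1)`, `u(-1) = u(1) = 0`,
with `u ∈ C^1[-1,1]`, `φ_p ∘ u' ∈ C^1((-1,1))`, and `u > 0` on `(-1,1)`. -/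
structure Sol1D (p lam : ℝ) (f : ℝ → ℝ) (u : ℝ → ℝ) : Prop where
  reg : ContDiffOn ℝ 1 u (Set.Icc (-1) 1)
  reg' : ContDiffOn ℝ 1 (fun x => phi p (du u x)) (Set.Ioo (-1) 1)
  pos : ∀ x ∈ Set.Ioo (-1:ℝ) 1, 0 < u x
  bcm : u (-1) = 0
  bc1 : u 1 = 0
  ode : ∀ x ∈ Set.Ioo (-1:ℝ) 1,
    deriv (fun y => phi p (du u y)) x + lam * f (u x) = 0

/-- A solution of the linearized problem (4) at `u`:
`(φ_p'(u') w')' + λ f'(u) w = 0` on `(-1,1)`, `w(-1) = w(1) = 0`. -/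
structure Lin1D (p lam : ℝ) (f : ℝ → ℝ) (u w : ℝ → ℝ) : Prop where
  reg : ContDiffOn ℝ 1 w (Set.Icc (-1) 1)
  reg' : ContDiffOn ℝ 1 (fun x => phi' p (du u x) * du w x) (Set.Ioo (-1) 1)
  ode : ∀ x ∈ Set.Ioo (-1:ℝ) 1,
    deriv (fun y => phi' p (du u y) * du w y) x + lam * deriv f (u x) * w x = 0
  bcm : w (-1) = 0
  bc1 : w 1 = 0

/-!
The energy `(p-1)/p |u'|^p + λ F(u)`, `F = ∫₀ f`, is conserved along `u`. At a critical point it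
equals `λ F(max u)`, which forces `f(u) ≠ 0` there; the Wronskian of `w > 0` with `u'` then shows
that `u` has a single critical point, and energy conservation makes `u` even and decreasing on
`[0, 1]`. The Wronskian of `w` with its reflection `w(-·)` gives `φ_p'(u'(0)) w'(0) = 0`. Finally
`H = W(w, u) = (p-1) w φ_p(u') - u φ_p'(u') w'` vanishes at `0`, and
`H' = λ w (u f'(u) - (p-1) f(u)) > 0` where `u > γ`, that is on `(0, x₀)`. Hence `H(x₀) > 0`, and
as `φ_p(u'(x₀)) < 0` this forces `w'(x₀) < 0`.
-/

open Filter Topology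

lemma phi_zero (p : ℝ) : phi p 0 = 0 := by simp [phi]

lemma phi_neg (p t : ℝ) : phi p (-t) = -phi p t := by simp [phi]

lemma phi'_neg (p t : ℝ) : phi' p (-t) = phi' p t := by simp [phi']

lemma phi_pos_iff {p t : ℝ} : 0 < phi p t ↔ 0 < t := by
  rcases eq_or_ne t 0 with rfl | ht
  · simp [phi]
  · exact mul_pos_iff_of_pos_right (Real.rpow_pos_of_pos (abs_pos.2 ht) _)

lemma phi_neg_iff {p t : ℝ} : phi p t < 0 ↔ t < 0 := by
  simpa [phi_neg] using phi_pos_iff (p := p) (t := -t)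

lemma phi_eq_zero_iff {p t : ℝ} : phi p t = 0 ↔ t = 0 := by
  simp +contextual [phi, Real.rpow_eq_zero_iff_of_nonneg]

lemma phi'_pos {p t : ℝ} (hp : 1 < p) (ht : t ≠ 0) : 0 < phi' p t :=
  mul_pos (by linarith) (Real.rpow_pos_of_pos (abs_pos.2 ht) _)

lemma mul_phi' (p t : ℝ) : t * phi' p t = (p - 1) * phi p t := by
  unfold phi phi'; ring

lemma abs_phi {p : ℝ} (hp : 1 < p) (t : ℝ) : |phi p t| = |t| ^ (p - 1) := by
  rcases eq_or_ne t 0 with rfl | ht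
  · simp [phi, Real.zero_rpow (by linarith : p - 1 ≠ 0)]
  · rw [phi, abs_mul, abs_of_nonneg (Real.rpow_nonneg (abs_nonneg t) _),
      ← Real.rpow_one_add' (abs_nonneg t) (by linarith)]
    ring_nf

lemma abs_phi_rpow_conjExponent_sub_two {p : ℝ} (hp : 1 < p) (t : ℝ) :
    |phi p t| ^ (p.conjExponent - 2) = |t| ^ (2 - p) := by
  rw [abs_phi hp, ← Real.rpow_mul (abs_nonneg t), Real.conjExponent]
  congr 1
  field_simp [(by linarith : p - 1 ≠ 0)]
  ring

lemma abs_phi_rpow_conjExponent {p : ℝ} (hp : 1 < p) (t : ℝ) :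
    |phi p t| ^ p.conjExponent = |t| ^ p := by
  rw [abs_phi hp, ← Real.rpow_mul (abs_nonneg t), Real.conjExponent]
  congr 1
  field_simp [(by linarith : p - 1 ≠ 0)]

lemma phi_conjExponent_phi {p : ℝ} (hp : 1 < p) (t : ℝ) : phi p.conjExponent (phi p t) = t := by
  rcases eq_or_ne t 0 with rfl | ht
  · simp [phi]
  · have h := Real.rpow_add (abs_pos.2 ht) (p - 2) (2 - p)
    rw [show p - 2 + (2 - p) = 0 by ring, Real.rpow_zero] at h
    rw [phi, abs_phi_rpow_conjExponent_sub_two hp, phi, mul_assoc, ← h, mul_one]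

lemma phi'_conjExponent_phi_mul_phi' {p t : ℝ} (hp : 1 < p) (ht : t ≠ 0) :
    phi' p.conjExponent (phi p t) * phi' p t = 1 := by
  have h := Real.rpow_add (abs_pos.2 ht) (2 - p) (p - 2)
  rw [show 2 - p + (p - 2) = 0 by ring, Real.rpow_zero] at h
  rw [phi', abs_phi_rpow_conjExponent_sub_two hp, phi', Real.conjExponent]
  have hp1 : p - 1 ≠ 0 := by linarith
  calc (p / (p - 1) - 1) * |t| ^ (2 - p) * ((p - 1) * |t| ^ (p - 2))
      = (p / (p - 1) - 1) * (p - 1) * (|t| ^ (2 - p) * |t| ^ (p - 2)) := by ring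
    _ = 1 := by rw [← h]; field_simp; ring

lemma hasDerivAt_phi_of_pos {e t : ℝ} (ht : 0 < t) : HasDerivAt (phi e) (phi' e t) t := by
  have heq : phi e =ᶠ[𝓝 t] fun s => s ^ (e - 1) := by
    filter_upwards [Ioi_mem_nhds ht] with s hs
    rw [phi, abs_of_pos hs, show e - 1 = 1 + (e - 2) by ring, Real.rpow_add hs, Real.rpow_one]
  rw [phi', abs_of_pos ht, show e - 2 = e - 1 - 1 by ring]
  exact (Real.hasDerivAt_rpow_const (Or.inl ht.ne')).congr_of_eventuallyEq heq

lemma hasDerivAt_phi {e t : ℝ} (ht : t ≠ 0) : HasDerivAt (phi e) (phi' e t) t := by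
  rcases ht.lt_or_gt with h | h
  · have := ((hasDerivAt_phi_of_pos (e := e) (neg_pos.2 h)).comp t (hasDerivAt_neg t)).neg
    have hfun : (-phi e ∘ Neg.neg) = phi e := by ext s; simp [phi_neg]
    rwa [hfun, phi'_neg, mul_neg_one, neg_neg] at this
  · exact hasDerivAt_phi_of_pos h

lemma hasDerivAt_deriv_of_contDiffOn {g : ℝ → ℝ} {s : Set ℝ} {x : ℝ} (hg : ContDiffOn ℝ 1 g s)
    (hs : s ∈ 𝓝 x) : HasDerivAt g (deriv g x) x :=
  ((hg.differentiableOn one_ne_zero x (mem_of_mem_nhds hs)).differentiableAt hs).hasDerivAt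

lemma hasDerivAt_du_of_contDiffOn {u : ℝ → ℝ} {x : ℝ} (hu : ContDiffOn ℝ 1 u (Icc (-1) 1))
    (hx : x ∈ Ioo (-1 : ℝ) 1) : HasDerivAt u (du u x) x := by
  have hs : Icc (-1 : ℝ) 1 ∈ 𝓝 x := Icc_mem_nhds hx.1 hx.2
  rw [du, derivWithin_of_mem_nhds hs]
  exact hasDerivAt_deriv_of_contDiffOn hu hs

lemma eq_of_hasDerivAt_eq_zero {F : ℝ → ℝ} {a b : ℝ} (hab : a ≤ b) (hc : ContinuousOn F (Icc a b))
    (hd : ∀ x ∈ Ioo a b, HasDerivAt F 0 x) : F a = F b := by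
  rcases hab.eq_or_lt with rfl | hlt
  · rfl
  obtain ⟨_, _, h⟩ := exists_hasDerivAt_eq_slope F (fun _ => 0) hlt hc hd
  rw [eq_comm, div_eq_zero_iff, sub_eq_zero] at h
  exact (h.resolve_right (sub_ne_zero.2 hlt.ne')).symm

lemma eq_of_hasDerivAt_eq_zero_Ioo {F : ℝ → ℝ} {a b x y : ℝ} (hd : ∀ z ∈ Ioo a b, HasDerivAt F 0 z)
    (hx : x ∈ Ioo a b) (hy : y ∈ Ioo a b) : F x = F y :=
  isOpen_Ioo.is_const_of_deriv_eq_zero isPreconnected_Ioo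
    (fun z hz => (hd z hz).differentiableAt.differentiableWithinAt) (fun z hz => (hd z hz).deriv)
    hx hy

lemma strictMonoOn_Icc_of_hasDerivAt_pos {F F' : ℝ → ℝ} {a b : ℝ} (hc : ContinuousOn F (Icc a b))
    (hd : ∀ x ∈ Ioo a b, HasDerivAt F (F' x) x) (hpos : ∀ x ∈ Ioo a b, 0 < F' x) :
    StrictMonoOn F (Icc a b) :=
  strictMonoOn_of_hasDerivWithinAt_pos (convex_Icc a b) hc
    (by simpa using fun x hx => (hd x hx).hasDerivWithinAt) (by simpa using hpos)

lemma strictAntiOn_Icc_of_hasDerivAt_neg {F F' : ℝ → ℝ} {a b : ℝ} (hc : ContinuousOn F (Icc a b))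
    (hd : ∀ x ∈ Ioo a b, HasDerivAt F (F' x) x) (hneg : ∀ x ∈ Ioo a b, F' x < 0) :
    StrictAntiOn F (Icc a b) :=
  strictAntiOn_of_hasDerivWithinAt_neg (convex_Icc a b) hc
    (by simpa using fun x hx => (hd x hx).hasDerivWithinAt) (by simpa using hneg)

lemma monotoneOn_Icc_of_hasDerivAt_nonneg {F F' : ℝ → ℝ} {a b : ℝ} (hc : ContinuousOn F (Icc a b))
    (hd : ∀ x ∈ Ioo a b, HasDerivAt F (F' x) x) (hnn : ∀ x ∈ Ioo a b, 0 ≤ F' x) :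
    MonotoneOn F (Icc a b) :=
  monotoneOn_of_hasDerivWithinAt_nonneg (convex_Icc a b) hc
    (by simpa using fun x hx => (hd x hx).hasDerivWithinAt) (by simpa using hnn)

lemma exists_first_zero_right {v : ℝ → ℝ} {a b d : ℝ} (hab : a < b) (hv : ContinuousOn v (Icc a b))
    (hb : v b = 0) (hd : HasDerivAt v d a) (hd0 : d ≠ 0) :
    ∃ z ∈ Ioc a b, v z = 0 ∧ ∀ y ∈ Ioo a z, v y ≠ 0 := by
  have hev : ∀ᶠ y in 𝓝[>] a, v y ≠ 0 :=
    (hd.eventually_ne hd0).filter_mono (nhdsWithin_mono a fun y (hy : a < y) => hy.ne')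
  obtain ⟨e, hae : a < e, he⟩ := mem_nhdsGT_iff_exists_Ioo_subset.1 hev
  set s := min ((a + e) / 2) b
  have has : a < s := lt_min (by linarith) hab
  set Z := Icc s b ∩ v ⁻¹' {0}
  have hZ : IsClosed Z :=
    (hv.mono (Icc_subset_Icc_left has.le)).preimage_isClosed_of_isClosed isClosed_Icc
      isClosed_singleton
  have hbZ : b ∈ Z := ⟨⟨min_le_right _ _, le_rfl⟩, hb⟩
  have hZbdd : BddBelow Z := ⟨s, fun y hy => hy.1.1⟩
  have hzZ : sInf Z ∈ Z := hZ.csInf_mem ⟨b, hbZ⟩ hZbdd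
  refine ⟨sInf Z, ⟨has.trans_le hzZ.1.1, hzZ.1.2⟩, hzZ.2, fun y hy hvy => ?_⟩
  rcases lt_or_ge y s with hys | hys
  · have hye : y < e := by have := min_le_left ((a + e) / 2) b; linarith
    exact he ⟨hy.1, hye⟩ hvy
  · exact (csInf_le hZbdd ⟨⟨hys, hy.2.le.trans hzZ.1.2⟩, hvy⟩).not_gt hy.2

lemma exists_bound_of_hasDerivAt {g g' : ℝ → ℝ} {a b C : ℝ}
    (hd : ∀ x ∈ Ioo a b, HasDerivAt g (g' x) x) (hC : ∀ x ∈ Ioo a b, |g' x| ≤ C) :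
    ∃ B, ∀ x ∈ Ioo a b, |g x| ≤ B := by
  rcases le_or_gt b a with hba | hab
  · exact ⟨0, fun x hx => absurd (hx.1.trans hx.2) (not_lt.2 hba)⟩
  obtain ⟨m, hm⟩ : ∃ m, m ∈ Ioo a b := nonempty_Ioo.2 hab
  refine ⟨|g m| + C * (b - a), fun x hx => ?_⟩
  have hlip := (convex_Ioo a b).norm_image_sub_le_of_norm_hasDerivWithin_le
    (fun y hy => (hd y hy).hasDerivWithinAt) hC hm hx
  have hxm : |x - m| ≤ b - a := abs_le.2 ⟨by linarith [hx.1, hm.2], by linarith [hx.2, hm.1]⟩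
  have hC0 : 0 ≤ C := (abs_nonneg _).trans (hC m hm)
  simp only [Real.norm_eq_abs] at hlip
  calc |g x| ≤ |g m| + |g x - g m| := by
        simpa using abs_add_le (g m) (g x - g m)
    _ ≤ |g m| + C * (b - a) := by gcongr; exact hlip.trans (mul_le_mul_of_nonneg_left hxm hC0)

lemma invFunOn_Icc_mem_Ioo {u : ℝ → ℝ} {a c m : ℝ} (hac : a ≤ c)
    (hcont : ContinuousOn u (Icc a c)) (hm : m ∈ Ioo (u a) (u c)) :
    Function.invFunOn u (Icc a c) m ∈ Ioo a c := by
  have hsurj : SurjOn u (Icc a c) (Icc (u a) (u c)) := intermediate_value_Icc hac hcont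
  have hmem := hsurj.mapsTo_invFunOn (Ioo_subset_Icc_self hm)
  have hinv := hsurj.rightInvOn_invFunOn (Ioo_subset_Icc_self hm)
  refine ⟨hmem.1.lt_of_ne ?_, hmem.2.lt_of_ne ?_⟩ <;> rintro h
  · exact hm.1.ne (by rw [h, hinv])
  · exact hm.2.ne (by rw [← h, hinv])

lemma continuousOn_invFunOn_Icc {u : ℝ → ℝ} {a c : ℝ} (hac : a < c)
    (hcont : ContinuousOn u (Icc a c)) (hmono : StrictMonoOn u (Icc a c)) :
    ContinuousOn (Function.invFunOn u (Icc a c)) (Icc (u a) (u c)) := by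
  set ψ := Function.invFunOn u (Icc a c)
  have hsurj : SurjOn u (Icc a c) (Icc (u a) (u c)) := intermediate_value_Icc hac.le hcont
  have hleft : ∀ s ∈ Icc a c, ψ (u s) = s := fun s hs => hmono.injOn.leftInvOn_invFunOn hs
  have hψmono : MonotoneOn ψ (Icc (u a) (u c)) := by
    intro m hm m' hm' hle
    by_contra! hlt
    have := hmono (hsurj.mapsTo_invFunOn hm') (hsurj.mapsTo_invFunOn hm) hlt
    rw [hsurj.rightInvOn_invFunOn hm, hsurj.rightInvOn_invFunOn hm'] at this
    exact this.not_ge hle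
  have hψimage : ψ '' Icc (u a) (u c) = Icc a c :=
    hsurj.mapsTo_invFunOn.image_subset.antisymm fun s hs =>
      ⟨u s, ⟨hmono.monotoneOn (left_mem_Icc.2 hac.le) hs hs.1,
        hmono.monotoneOn hs (right_mem_Icc.2 hac.le) hs.2⟩, hleft s hs⟩
  have hua : u a < u c := hmono (left_mem_Icc.2 hac.le) (right_mem_Icc.2 hac.le) hac
  intro m hm
  rcases hm.1.eq_or_lt with rfl | h₁
  · refine (continuousWithinAt_right_of_monotoneOn_of_image_mem_nhdsWithin hψmono
      (Icc_mem_nhdsGE hua) ?_).mono Icc_subset_Ici_self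
    rw [hψimage, hleft a (left_mem_Icc.2 hac.le)]
    exact Icc_mem_nhdsGE hac
  rcases hm.2.eq_or_lt with rfl | h₂
  · refine (continuousWithinAt_left_of_monotoneOn_of_image_mem_nhdsWithin hψmono
      (Icc_mem_nhdsLE hua) ?_).mono Icc_subset_Iic_self
    rw [hψimage, hleft c (right_mem_Icc.2 hac.le)]
    exact Icc_mem_nhdsLE hac
  refine (continuousAt_of_monotoneOn_of_image_mem_nhds hψmono (Icc_mem_nhds h₁ h₂) ?_)
    |>.continuousWithinAt
  have hψm := invFunOn_Icc_mem_Ioo hac.le hcont ⟨h₁, h₂⟩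
  rw [hψimage]
  exact Icc_mem_nhds hψm.1 hψm.2

lemma hasDerivAt_invFunOn_Icc {u u' : ℝ → ℝ} {a c m : ℝ} (hac : a < c)
    (hcont : ContinuousOn u (Icc a c)) (hmono : StrictMonoOn u (Icc a c))
    (hd : ∀ s ∈ Ioo a c, HasDerivAt u (u' s) s) (hne : ∀ s ∈ Ioo a c, u' s ≠ 0)
    (hm : m ∈ Ioo (u a) (u c)) :
    HasDerivAt (Function.invFunOn u (Icc a c)) (u' (Function.invFunOn u (Icc a c) m))⁻¹ m := by
  have hs := invFunOn_Icc_mem_Ioo hac.le hcont hm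
  have hsurj : SurjOn u (Icc a c) (Icc (u a) (u c)) := intermediate_value_Icc hac.le hcont
  have hnhds : Icc (u a) (u c) ∈ 𝓝 m := Icc_mem_nhds hm.1 hm.2
  exact .of_local_left_inverse ((continuousOn_invFunOn_Icc hac hcont hmono).continuousAt hnhds)
    (hd _ hs) (hne _ hs) (eventually_of_mem hnhds fun y hy => hsurj.rightInvOn_invFunOn hy)

/-- The inverse `ψ` of the increasing branch satisfies `(ψ ∘ u)' = -1` on the decreasing one. -/
lemma reflect_of_hasDerivAt_eq_neg {u u' : ℝ → ℝ} {a b c : ℝ} (hac : a < c) (hcb : c < b)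
    (hcont : ContinuousOn u (Icc a b)) (hmono : StrictMonoOn u (Icc a c))
    (hanti : StrictAntiOn u (Icc c b)) (hab : u a = u b) (hd : ∀ x ∈ Ioo a b, HasDerivAt u (u' x) x)
    (hne : ∀ s ∈ Ioo a c, u' s ≠ 0)
    (hrefl : ∀ s ∈ Ioo a c, ∀ x ∈ Ioo c b, u s = u x → u' s = -u' x) :
    a + b = 2 * c ∧ ∀ x ∈ Icc c b, u (a + b - x) = u x := by
  set ψ := Function.invFunOn u (Icc a c)
  have hcontL : ContinuousOn u (Icc a c) := hcont.mono (Icc_subset_Icc_right hcb.le)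
  have hsurj : SurjOn u (Icc a c) (Icc (u a) (u c)) := intermediate_value_Icc hac.le hcontL
  have hmaps : MapsTo u (Icc c b) (Icc (u a) (u c)) := fun x hx =>
    ⟨hab ▸ hanti.antitoneOn hx (right_mem_Icc.2 hcb.le) hx.2,
      hanti.antitoneOn (left_mem_Icc.2 hcb.le) hx hx.1⟩
  have hθcont : ContinuousOn (fun x => ψ (u x) + x) (Icc c b) :=
    ((continuousOn_invFunOn_Icc hac hcontL hmono).comp (hcont.mono (Icc_subset_Icc_left hac.le))
      hmaps).add continuousOn_id
  have hθd : ∀ x ∈ Ioo c b, HasDerivAt (fun x => ψ (u x) + x) 0 x := by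
    intro x hx
    have hux : u x ∈ Ioo (u a) (u c) :=
      ⟨hab ▸ hanti (Ioo_subset_Icc_self hx) (right_mem_Icc.2 hcb.le) hx.2,
        hanti (left_mem_Icc.2 hcb.le) (Ioo_subset_Icc_self hx) hx.1⟩
    have hs := invFunOn_Icc_mem_Ioo hac.le hcontL hux
    have hus : u (ψ (u x)) = u x := hsurj.rightInvOn_invFunOn (Ioo_subset_Icc_self hux)
    have hx' : u' x ≠ 0 := fun h => hne _ hs (by rw [hrefl _ hs x hx hus, h, neg_zero])
    have hψ := hasDerivAt_invFunOn_Icc hac hcontL hmono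
      (fun s hs => hd s ⟨hs.1, hs.2.trans hcb⟩) hne hux
    refine ((hψ.comp x (hd x ⟨hac.trans hx.1, hx.2⟩)).add (hasDerivAt_id x)).congr_deriv ?_
    rw [hrefl _ hs x hx hus, inv_neg, neg_mul, inv_mul_cancel₀ hx', neg_add_cancel]
  have hθ : ∀ x ∈ Icc c b, ψ (u c) + c = ψ (u x) + x := fun x hx =>
    eq_of_hasDerivAt_eq_zero hx.1 (hθcont.mono (Icc_subset_Icc_right hx.2))
      (fun y hy => hθd y ⟨hy.1, hy.2.trans_le hx.2⟩)
  have hψc : ψ (u c) = c := hmono.injOn.leftInvOn_invFunOn (right_mem_Icc.2 hac.le)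
  have hψa : ψ (u a) = a := hmono.injOn.leftInvOn_invFunOn (left_mem_Icc.2 hac.le)
  have hsum : a + b = 2 * c := by
    have := hθ b (right_mem_Icc.2 hcb.le)
    rw [hψc, ← hab, hψa] at this
    linarith
  refine ⟨hsum, fun x hx => ?_⟩
  have hψx : ψ (u x) = a + b - x := by linarith [hθ x hx]
  rw [← hψx, hsurj.rightInvOn_invFunOn (hmaps hx)]

lemma hasDerivAt_integral_of_continuousOn_Ici {f : ℝ → ℝ} (hf : ContinuousOn f (Ici 0)) {t : ℝ}
    (ht : 0 < t) : HasDerivAt (fun s => ∫ r in (0 : ℝ)..s, f r) (f t) t :=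
  intervalIntegral.integral_hasDerivAt_right
    (ContinuousOn.intervalIntegrable (hf.mono (by simp [uIcc_of_le ht.le, Icc_subset_Ici_self])))
    (ContinuousOn.stronglyMeasurableAtFilter isOpen_Ioi (hf.mono Ioi_subset_Ici_self) t ht)
    (hf.continuousAt (Ici_mem_nhds ht))

structure ChangesSignAt (f : ℝ → ℝ) (γ : ℝ) : Prop where
  pos : 0 < γ
  neg_of_lt : ∀ v ∈ Ioo 0 γ, f v < 0
  pos_of_gt : ∀ v > γ, 0 < f v

lemma ChangesSignAt.eq_zero {f : ℝ → ℝ} {γ : ℝ} (hs : ChangesSignAt f γ) (hf : ContinuousAt f γ) :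
    f γ = 0 := by
  refine le_antisymm ?_ ?_
  · refine le_of_tendsto (hf.mono_left (nhdsWithin_le_nhds (s := Iio γ))) ?_
    filter_upwards [Ioo_mem_nhdsLT hs.pos] with v hv using (hs.neg_of_lt v hv).le
  · refine ge_of_tendsto (hf.mono_left (nhdsWithin_le_nhds (s := Ioi γ))) ?_
    filter_upwards [self_mem_nhdsWithin] with v hv using (hs.pos_of_gt v hv).le

namespace Sol1D

variable {p lam γ c : ℝ} {f u : ℝ → ℝ}

lemma hasDerivAt (hu : Sol1D p lam f u) {x : ℝ} (hx : x ∈ Ioo (-1 : ℝ) 1) :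
    HasDerivAt u (du u x) x :=
  hasDerivAt_du_of_contDiffOn hu.reg hx

lemma continuousOn_du (hu : Sol1D p lam f u) : ContinuousOn (du u) (Icc (-1) 1) :=
  hu.reg.continuousOn_derivWithin (uniqueDiffOn_Icc (by norm_num)) le_rfl

lemma nonneg (hu : Sol1D p lam f u) {x : ℝ} (hx : x ∈ Icc (-1 : ℝ) 1) : 0 ≤ u x := by
  rcases hx.1.eq_or_lt with rfl | h₁
  · exact hu.bcm.ge
  rcases hx.2.eq_or_lt with rfl | h₂
  · exact hu.bc1.ge
  exact (hu.pos x ⟨h₁, h₂⟩).le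

lemma hasDerivAt_phi_du (hu : Sol1D p lam f u) {x : ℝ} (hx : x ∈ Ioo (-1 : ℝ) 1) :
    HasDerivAt (fun y => phi p (du u y)) (-(lam * f (u x))) x := by
  have h := hasDerivAt_deriv_of_contDiffOn hu.reg' (Ioo_mem_nhds hx.1 hx.2)
  rwa [eq_neg_of_add_eq_zero_left (hu.ode x hx)] at h

lemma continuousOn_phi_du (hu : Sol1D p lam f u) :
    ContinuousOn (fun y => phi p (du u y)) (Ioo (-1) 1) :=
  fun _ hx => (hu.hasDerivAt_phi_du hx).continuousAt.continuousWithinAt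

lemma hasDerivAt_du (hp : 1 < p) (hu : Sol1D p lam f u) {x : ℝ} (hx : x ∈ Ioo (-1 : ℝ) 1)
    (hne : du u x ≠ 0) : HasDerivAt (du u) (-(lam * f (u x)) / phi' p (du u x)) x := by
  have hfun : (fun y => phi p.conjExponent (phi p (du u y))) = du u :=
    funext fun y => phi_conjExponent_phi hp _
  have h := (hasDerivAt_phi (e := p.conjExponent) (mt phi_eq_zero_iff.1 hne)).comp x
    (hu.hasDerivAt_phi_du hx)
  rw [Function.comp_def, hfun] at h
  refine h.congr_deriv ?_
  rw [eq_div_iff (phi'_pos hp hne).ne', mul_comm, ← mul_assoc, mul_comm (phi' p _),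
    phi'_conjExponent_phi_mul_phi' hp hne, one_mul]

lemma du_neg_eq (hu : Sol1D p lam f u) (heven : ∀ x ∈ Ioo (-1 : ℝ) 1, u (-x) = u x) {x : ℝ}
    (hx : x ∈ Ioo (-1 : ℝ) 1) : du u (-x) = -du u x := by
  have hmx : -x ∈ Ioo (-1 : ℝ) 1 := ⟨by linarith [hx.2], by linarith [hx.1]⟩
  have h := ((hu.hasDerivAt hmx).comp x (hasDerivAt_neg x)).congr_of_eventuallyEq
    (eventually_of_mem (Ioo_mem_nhds hx.1 hx.2) fun y hy => (heven y hy).symm)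
  linarith [h.unique (hu.hasDerivAt hx)]

lemma energy_eq (hp : 1 < p) (hf : ContinuousOn f (Ici 0)) (hu : Sol1D p lam f u) {x y : ℝ}
    (hx : x ∈ Ioo (-1 : ℝ) 1) (hy : y ∈ Ioo (-1 : ℝ) 1) :
    (p - 1) / p * |du u x| ^ p + lam * ∫ t in (0 : ℝ)..u x, f t =
      (p - 1) / p * |du u y| ^ p + lam * ∫ t in (0 : ℝ)..u y, f t := by
  simp only [← abs_phi_rpow_conjExponent hp]
  refine eq_of_hasDerivAt_eq_zero_Ioo (F := fun z => (p - 1) / p * |phi p (du u z)| ^ p.conjExponent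
    + lam * ∫ t in (0 : ℝ)..u z, f t) (fun z hz => ?_) hx hy
  have hkin := (hasDerivAt_abs_rpow _ (Real.HolderConjugate.conjExponent hp).symm.lt).comp z
    (hu.hasDerivAt_phi_du hz)
  have hpot := (hasDerivAt_integral_of_continuousOn_Ici hf (hu.pos z hz)).comp z (hu.hasDerivAt hz)
  refine ((hkin.const_mul _).add (hpot.const_mul lam)).congr_deriv ?_
  have hinv := phi_conjExponent_phi hp (du u z)
  rw [phi] at hinv
  have hq : (p - 1) / p * p.conjExponent = 1 := by
    rw [Real.conjExponent]; field_simp [(by linarith : p - 1 ≠ 0), (by linarith : p ≠ 0)]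
  linear_combination (-(lam * f (u z)) * ((p - 1) / p * p.conjExponent)) * hinv
    - lam * f (u z) * du u z * hq

lemma abs_du_eq_of_eq (hp : 1 < p) (hf : ContinuousOn f (Ici 0)) (hu : Sol1D p lam f u) {x y : ℝ}
    (hx : x ∈ Ioo (-1 : ℝ) 1) (hy : y ∈ Ioo (-1 : ℝ) 1) (hxy : u x = u y) :
    |du u x| = |du u y| := by
  have h := hu.energy_eq hp hf hx hy
  rw [hxy, add_left_inj, mul_right_inj' (div_ne_zero (by linarith) (by linarith))] at h
  exact Real.rpow_left_injOn (by linarith) (abs_nonneg (du u x)) (abs_nonneg (du u y)) h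

lemma exists_isMaxOn (hu : Sol1D p lam f u) : ∃ c ∈ Ioo (-1 : ℝ) 1, IsMaxOn u (Icc (-1) 1) c := by
  obtain ⟨c, hc, hmax⟩ :=
    isCompact_Icc.exists_isMaxOn (nonempty_Icc.2 (by norm_num)) hu.reg.continuousOn
  have h0 : 0 < u c := (hu.pos 0 (by norm_num)).trans_le (hmax (by norm_num : (0 : ℝ) ∈ Icc (-1) 1))
  refine ⟨c, ⟨hc.1.lt_of_ne ?_, hc.2.lt_of_ne ?_⟩, hmax⟩ <;> rintro rfl
  · exact h0.ne' hu.bcm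
  · exact h0.ne' hu.bc1

lemma du_eq_zero_of_isMaxOn (hu : Sol1D p lam f u) (hc : c ∈ Ioo (-1 : ℝ) 1)
    (hmax : IsMaxOn u (Icc (-1) 1) c) : du u c = 0 :=
  (hmax.isLocalMax (Icc_mem_nhds hc.1 hc.2)).hasDerivAt_eq_zero (hu.hasDerivAt hc)

/-- If `max u ≤ γ` then `(φ_p(u'))' = -λ f(u) ≥ 0`, so `u` cannot decrease after its maximum. -/
lemma lt_of_isMaxOn (hlam : 0 < lam) (hf : ContinuousOn f (Ici 0)) (hs : ChangesSignAt f γ)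
    (hu : Sol1D p lam f u) (hc : c ∈ Ioo (-1 : ℝ) 1) (hmax : IsMaxOn u (Icc (-1) 1) c) :
    γ < u c := by
  by_contra! hcγ
  have hfγ := hs.eq_zero (hf.continuousAt (Ici_mem_nhds hs.pos))
  have hsub : ∀ {y}, y ∈ Ioo c 1 → y ∈ Ioo (-1 : ℝ) 1 := fun hy => ⟨hc.1.trans hy.1, hy.2⟩
  have hfu : ∀ y ∈ Ioo (-1 : ℝ) 1, f (u y) ≤ 0 := by
    intro y hy
    rcases ((hmax (Ioo_subset_Icc_self hy)).trans hcγ).lt_or_eq with h | h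
    · exact (hs.neg_of_lt _ ⟨hu.pos y hy, h⟩).le
    · rw [h, hfγ]
  have hdu : ∀ y ∈ Ioo c 1, 0 ≤ du u y := by
    intro y hy
    have hmono : MonotoneOn (fun y => phi p (du u y)) (Icc c y) :=
      monotoneOn_Icc_of_hasDerivAt_nonneg
        (hu.continuousOn_phi_du.mono fun z hz => ⟨hc.1.trans_le hz.1, hz.2.trans_lt hy.2⟩)
        (fun z hz => hu.hasDerivAt_phi_du ⟨hc.1.trans hz.1, hz.2.trans hy.2⟩)
        (fun z hz => by
          have := hfu z ⟨hc.1.trans hz.1, hz.2.trans hy.2⟩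
          nlinarith)
    have : phi p (du u c) ≤ phi p (du u y) :=
      hmono (left_mem_Icc.2 hy.1.le) (right_mem_Icc.2 hy.1.le) hy.1.le
    rw [hu.du_eq_zero_of_isMaxOn hc hmax, phi_zero] at this
    exact not_lt.1 fun h => (phi_neg_iff.2 h).not_ge this
  have hmono : MonotoneOn u (Icc c 1) :=
    monotoneOn_Icc_of_hasDerivAt_nonneg (hu.reg.continuousOn.mono (Icc_subset_Icc_left hc.1.le))
      (fun y hy => hu.hasDerivAt (hsub hy)) hdu
  have := hmono (left_mem_Icc.2 hc.2.le) (right_mem_Icc.2 hc.2.le) hc.2.le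
  rw [hu.bc1] at this
  exact (hu.pos c hc).not_ge this

/-- At a critical point the energy equals `λ F(max u)`, and `F = ∫₀ f` takes the value `F(max u)`
on `[γ, ∞)` only at `max u`, where `f > 0`. -/
lemma f_ne_zero_of_du_eq_zero (hp : 1 < p) (hlam : 0 < lam) (hf : ContinuousOn f (Ici 0))
    (hs : ChangesSignAt f γ) (hu : Sol1D p lam f u) (hc : c ∈ Ioo (-1 : ℝ) 1)
    (hmax : IsMaxOn u (Icc (-1) 1) c) {z : ℝ} (hz : z ∈ Ioo (-1 : ℝ) 1) (hdz : du u z = 0) :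
    f (u z) ≠ 0 := by
  have hγc := hu.lt_of_isMaxOn hlam hf hs hc hmax
  have hF : ∫ t in (0 : ℝ)..u z, f t = ∫ t in (0 : ℝ)..u c, f t := by
    have h := hu.energy_eq hp hf hz hc
    rw [hdz, hu.du_eq_zero_of_isMaxOn hc hmax, add_right_inj] at h
    exact mul_left_cancel₀ hlam.ne' h
  have hFmono : StrictMonoOn (fun s => ∫ t in (0 : ℝ)..s, f t) (Ici γ) := by
    have hd := fun t (ht : t ∈ Ici γ) =>
      hasDerivAt_integral_of_continuousOn_Ici hf (hs.pos.trans_le ht)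
    refine strictMonoOn_of_hasDerivWithinAt_pos (f' := f) (convex_Ici γ)
      (fun t ht => (hd t ht).continuousAt.continuousWithinAt) ?_ ?_ <;> rw [interior_Ici]
    · exact fun t (ht : γ < t) => (hd t ht.le).hasDerivWithinAt
    · exact fun t ht => hs.pos_of_gt t ht
  rcases lt_trichotomy (u z) γ with h | h | h
  · exact (hs.neg_of_lt _ ⟨hu.pos z hz, h⟩).ne
  · rw [h] at hF
    exact absurd hF (hFmono self_mem_Ici (mem_Ici.2 hγc.le) hγc).ne
  · rw [hFmono.injOn (mem_Ici.2 h.le) (mem_Ici.2 hγc.le) hF]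
    exact (hs.pos_of_gt _ hγc).ne'

lemma du_neg_of_gt (hu : Sol1D p lam f u) (hc : c ∈ Ioo (-1 : ℝ) 1)
    (hzero : ∀ z ∈ Ioo (-1 : ℝ) 1, du u z = 0 → z = c) {x : ℝ} (hx : x ∈ Ioo c 1) :
    du u x < 0 := by
  by_contra! hx0
  have hsub : Ioo c 1 ⊆ Ioo (-1) 1 := Ioo_subset_Ioo_left hc.1.le
  have hpos : ∀ y ∈ Ioo c 1, 0 < du u y := by
    intro y hy
    by_contra! hy0
    obtain ⟨z, hz, hdz⟩ := isPreconnected_Ioo.intermediate_value hy hx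
      (hu.continuousOn_du.mono (hsub.trans Ioo_subset_Icc_self)) ⟨hy0, hx0⟩
    exact hz.1.ne' (hzero z (hsub hz) hdz)
  have hmono := strictMonoOn_Icc_of_hasDerivAt_pos
    (hu.reg.continuousOn.mono (Icc_subset_Icc_left hc.1.le)) (fun y hy => hu.hasDerivAt (hsub hy))
    hpos
  have := hmono (left_mem_Icc.2 hc.2.le) (right_mem_Icc.2 hc.2.le) hc.2
  rw [hu.bc1] at this
  exact (hu.pos c hc).not_gt this

lemma du_pos_of_lt (hu : Sol1D p lam f u) (hc : c ∈ Ioo (-1 : ℝ) 1)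
    (hzero : ∀ z ∈ Ioo (-1 : ℝ) 1, du u z = 0 → z = c) {x : ℝ} (hx : x ∈ Ioo (-1) c) :
    0 < du u x := by
  by_contra! hx0
  have hsub : Ioo (-1) c ⊆ Ioo (-1) 1 := Ioo_subset_Ioo_right hc.2.le
  have hneg : ∀ y ∈ Ioo (-1) c, du u y < 0 := by
    intro y hy
    by_contra! hy0
    obtain ⟨z, hz, hdz⟩ := isPreconnected_Ioo.intermediate_value hx hy
      (hu.continuousOn_du.mono (hsub.trans Ioo_subset_Icc_self)) ⟨hx0, hy0⟩
    exact hz.2.ne (hzero z (hsub hz) hdz)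
  have hanti := strictAntiOn_Icc_of_hasDerivAt_neg
    (hu.reg.continuousOn.mono (Icc_subset_Icc_right hc.2.le)) (fun y hy => hu.hasDerivAt (hsub hy))
    hneg
  have := hanti (left_mem_Icc.2 hc.1.le) (right_mem_Icc.2 hc.1.le) hc.1
  rw [hu.bcm] at this
  exact (hu.pos c hc).not_gt this

end Sol1D

namespace Lin1D

variable {p lam γ c : ℝ} {f u w : ℝ → ℝ}

lemma hasDerivAt (hw : Lin1D p lam f u w) {x : ℝ} (hx : x ∈ Ioo (-1 : ℝ) 1) :
    HasDerivAt w (du w x) x :=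
  hasDerivAt_du_of_contDiffOn hw.reg hx

lemma hasDerivAt_flux (hw : Lin1D p lam f u w) {x : ℝ} (hx : x ∈ Ioo (-1 : ℝ) 1) :
    HasDerivAt (fun y => phi' p (du u y) * du w y) (-(lam * deriv f (u x) * w x)) x := by
  have h := hasDerivAt_deriv_of_contDiffOn hw.reg' (Ioo_mem_nhds hx.1 hx.2)
  rwa [eq_neg_of_add_eq_zero_left (hw.ode x hx)] at h

/-- This is the Wronskian `W(w, u')`; away from critical points `u'` solves the linearized
equation. -/
lemma hasDerivAt_wronskian_du (hp : 1 < p) (hf : ContDiffOn ℝ 1 f (Ici 0))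
    (hu : Sol1D p lam f u) (hw : Lin1D p lam f u w) {x : ℝ} (hx : x ∈ Ioo (-1 : ℝ) 1)
    (hne : du u x ≠ 0) :
    HasDerivAt (fun y => -(lam * f (u y) * w y) - du u y * (phi' p (du u y) * du w y)) 0 x := by
  have hfu := (hasDerivAt_deriv_of_contDiffOn hf (Ici_mem_nhds (hu.pos x hx))).comp x
    (hu.hasDerivAt hx)
  refine ((((hfu.const_mul lam).mul (hw.hasDerivAt hx)).neg).sub
    ((hu.hasDerivAt_du hp hx hne).mul (hw.hasDerivAt_flux hx))).congr_deriv ?_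
  field_simp [(phi'_pos hp hne).ne']
  simp only [Function.comp_apply]
  ring

/-- With `K = W(w, u')`, `(u'/w)' = K / (φ_p'(u') w²)`. By Rolle, `K` vanishes between two
consecutive critical points of `u`, whereas `K = -λ f(u) w ≠ 0` at the first. -/
lemma false_of_consecutive_critical_points (hp : 1 < p) (hlam : lam ≠ 0)
    (hf : ContDiffOn ℝ 1 f (Ici 0))
    (hu : Sol1D p lam f u) (hw : Lin1D p lam f u w) (hwpos : ∀ x ∈ Ioo (-1 : ℝ) 1, 0 < w x)
    {z₁ z₂ : ℝ} (hz₁ : -1 < z₁) (hz₂ : z₂ < 1) (hlt : z₁ < z₂) (h₁ : du u z₁ = 0)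
    (h₂ : du u z₂ = 0) (hne : ∀ x ∈ Ioo z₁ z₂, du u x ≠ 0) (hf₁ : f (u z₁) ≠ 0) : False := by
  have hsub : Icc z₁ z₂ ⊆ Ioo (-1) 1 := Icc_subset_Ioo hz₁ hz₂
  have hsub' : Ioo z₁ z₂ ⊆ Ioo (-1) 1 := Ioo_subset_Icc_self.trans hsub
  set K := fun x => -(lam * f (u x) * w x) - du u x * (phi' p (du u x) * du w x)
  have hKcont : ContinuousOn K (Icc z₁ z₂) := by
    have hfu : ContinuousOn (fun x => f (u x)) (Ioo (-1) 1) :=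
      hf.continuousOn.comp (hu.reg.continuousOn.mono Ioo_subset_Icc_self)
        fun x hx => mem_Ici.2 (hu.pos x hx).le
    refine ContinuousOn.mono ?_ hsub
    exact ((continuousOn_const.mul hfu).mul (hw.reg.continuousOn.mono Ioo_subset_Icc_self)).neg.sub
      ((hu.continuousOn_du.mono Ioo_subset_Icc_self).mul hw.reg'.continuousOn)
  have hρ : ∀ x ∈ Ioo z₁ z₂,
      HasDerivAt (fun y => du u y / w y) (K x / (phi' p (du u x) * w x ^ 2)) x := by
    intro x hx
    have hwx := (hwpos x (hsub' hx)).ne'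
    refine ((hu.hasDerivAt_du hp (hsub' hx) (hne x hx)).div (hw.hasDerivAt (hsub' hx)) hwx)
      |>.congr_deriv ?_
    field_simp [(phi'_pos hp (hne x hx)).ne']
    ring
  have hρcont : ContinuousOn (fun y => du u y / w y) (Icc z₁ z₂) :=
    ((hu.continuousOn_du.mono (hsub.trans Ioo_subset_Icc_self)).div
      (hw.reg.continuousOn.mono (hsub.trans Ioo_subset_Icc_self)))
      fun x hx => (hwpos x (hsub hx)).ne'
  obtain ⟨ξ, hξ, hρξ⟩ := exists_hasDerivAt_eq_zero hlt hρcont (by simp [h₁, h₂]) hρ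
  have hKξ : K ξ = 0 := by
    rwa [div_eq_zero_iff, or_iff_left (mul_pos (phi'_pos hp (hne ξ hξ))
      (pow_pos (hwpos ξ (hsub' hξ)) 2)).ne'] at hρξ
  have hKz₁ : K z₁ = K ξ := by
    refine eq_of_hasDerivAt_eq_zero hξ.1.le (hKcont.mono (Icc_subset_Icc_right hξ.2.le)) ?_
    intro y hy
    have hy' : y ∈ Ioo z₁ z₂ := ⟨hy.1, hy.2.trans hξ.2⟩
    exact hw.hasDerivAt_wronskian_du hp hf hu (hsub' hy') (hne y hy')
  simp only [K, h₁, zero_mul, sub_zero] at hKz₁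
  exact mul_ne_zero (mul_ne_zero hlam hf₁) (hwpos z₁ (hsub (left_mem_Icc.2 hlt.le))).ne'
    (neg_eq_zero.1 (hKz₁.trans hKξ))

lemma eq_of_du_eq_zero (hp : 1 < p) (hlam : 0 < lam) (hf : ContDiffOn ℝ 1 f (Ici 0))
    (hs : ChangesSignAt f γ) (hu : Sol1D p lam f u) (hw : Lin1D p lam f u w)
    (hwpos : ∀ x ∈ Ioo (-1 : ℝ) 1, 0 < w x) (hc : c ∈ Ioo (-1 : ℝ) 1)
    (hmax : IsMaxOn u (Icc (-1) 1) c) {z : ℝ} (hz : z ∈ Ioo (-1 : ℝ) 1) (hdz : du u z = 0) :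
    z = c := by
  have hzero : ∀ a ∈ Ioo (-1 : ℝ) 1, ∀ b ∈ Ioo (-1 : ℝ) 1, a < b → du u a = 0 → du u b = 0 →
      False := by
    intro a ha b hb hab hda hdb
    have hfa := hu.f_ne_zero_of_du_eq_zero hp hlam hf.continuousOn hs hc hmax ha hda
    obtain ⟨z', hz', hvz', hfree⟩ := exists_first_zero_right hab
      (hu.continuousOn_phi_du.mono (Icc_subset_Ioo ha.1 hb.2))
      (by rw [hdb, phi_zero] : phi p (du u b) = 0)
      (hu.hasDerivAt_phi_du ha) (neg_ne_zero.2 (mul_ne_zero hlam.ne' hfa))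
    exact hw.false_of_consecutive_critical_points hp hlam.ne' hf hu hwpos ha.1
      (hz'.2.trans_lt hb.2) hz'.1 hda
      (phi_eq_zero_iff.1 hvz') (fun y hy h => hfree y hy (by rw [h, phi_zero])) hfa
  have hdc := hu.du_eq_zero_of_isMaxOn hc hmax
  rcases lt_trichotomy z c with h | h | h
  · exact (hzero z hz c hc h hdz hdc).elim
  · exact h
  · exact (hzero c hc z hz h hdc hdz).elim

lemma exists_bound_flux (hf : ContDiffOn ℝ 1 f (Ici 0)) (hu : Sol1D p lam f u)
    (hw : Lin1D p lam f u w) : ∃ B, ∀ x ∈ Ioo (-1 : ℝ) 1, |phi' p (du u x) * du w x| ≤ B := by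
  have hcont : ContinuousOn (fun x => lam * derivWithin f (Ici 0) (u x) * w x) (Icc (-1) 1) :=
    (continuousOn_const.mul ((hf.continuousOn_derivWithin (uniqueDiffOn_Ici 0) le_rfl).comp
      hu.reg.continuousOn fun x hx => mem_Ici.2 (hu.nonneg hx))).mul hw.reg.continuousOn
  obtain ⟨C, hC⟩ := isCompact_Icc.exists_bound_of_continuousOn hcont
  refine exists_bound_of_hasDerivAt (C := C) (fun x hx => hw.hasDerivAt_flux hx) fun x hx => ?_
  rw [abs_neg, ← derivWithin_of_mem_nhds (Ici_mem_nhds (hu.pos x hx)), ← Real.norm_eq_abs]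
  exact hC x (Ioo_subset_Icc_self hx)

/-- For even `u`, `w(-·)` solves the same linearized equation; this is the Wronskian of `w`
and `w(-·)`. -/
lemma hasDerivAt_wronskian_neg (hu : Sol1D p lam f u) (hw : Lin1D p lam f u w)
    (heven : ∀ x ∈ Ioo (-1 : ℝ) 1, u (-x) = u x) {x : ℝ} (hx : x ∈ Ioo (-1 : ℝ) 1) :
    HasDerivAt (fun y => w y * (phi' p (du u (-y)) * du w (-y)) +
      w (-y) * (phi' p (du u y) * du w y)) 0 x := by
  have hmx : -x ∈ Ioo (-1 : ℝ) 1 := ⟨by linarith [hx.2], by linarith [hx.1]⟩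
  have hg_neg := (hw.hasDerivAt_flux hmx).comp x (hasDerivAt_neg x)
  have hw_neg := (hw.hasDerivAt hmx).comp x (hasDerivAt_neg x)
  refine (((hw.hasDerivAt hx).mul hg_neg).add (hw_neg.mul (hw.hasDerivAt_flux hx))).congr_deriv ?_
  simp only [Function.comp_apply, heven x hx, hu.du_neg_eq heven hx, phi'_neg]
  ring

/-- The Wronskian `Ω` of `w` and `w(-·)` is constant, equal to `2 w(0) φ_p'(u'(0)) w'(0)`, and
tends to `0` at `1` since the flux `φ_p'(u') w'` is bounded. -/
lemma flux_zero_eq_zero (hf : ContDiffOn ℝ 1 f (Ici 0)) (hu : Sol1D p lam f u)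
    (hw : Lin1D p lam f u w) (hw0 : w 0 ≠ 0) (heven : ∀ x ∈ Ioo (-1 : ℝ) 1, u (-x) = u x) :
    phi' p (du u 0) * du w 0 = 0 := by
  set g := fun y => phi' p (du u y) * du w y
  obtain ⟨B, hB⟩ := hw.exists_bound_flux hf hu
  set Ω := fun x => w x * g (-x) + w (-x) * g x
  have hmem : ∀ {x : ℝ}, x ∈ Ioo (-1 : ℝ) 1 → -x ∈ Ioo (-1 : ℝ) 1 := fun hx =>
    ⟨by linarith [hx.2], by linarith [hx.1]⟩
  have hΩd : ∀ x ∈ Ioo (-1 : ℝ) 1, HasDerivAt Ω 0 x := fun x hx =>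
    hw.hasDerivAt_wronskian_neg hu heven hx
  have hlim : Tendsto (fun x => |w x| * B + |w (-x)| * B) (𝓝[<] 1) (𝓝 0) := by
    have hcont : ContinuousOn (fun x => |w x| * B + |w (-x)| * B) (Icc (-1) 1) :=
      (hw.reg.continuousOn.abs.mul continuousOn_const).add
        ((hw.reg.continuousOn.comp continuousOn_neg fun x hx =>
          ⟨by linarith [hx.2], by linarith [hx.1]⟩).abs.mul continuousOn_const)
    have h := (hcont 1 (right_mem_Icc.2 (by norm_num))).tendsto
    rw [hw.bc1, hw.bcm] at h
    simpa using h.mono_left (nhdsWithin_le_of_mem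
      (mem_of_superset (Ioo_mem_nhdsLT (by norm_num)) Ioo_subset_Icc_self))
  have hΩlim : Tendsto Ω (𝓝[<] 1) (𝓝 0) := by
    refine squeeze_zero_norm' ?_ hlim
    filter_upwards [Ioo_mem_nhdsLT (by norm_num : (-1 : ℝ) < 1)] with x hx
    rw [Real.norm_eq_abs]
    refine (abs_add_le _ _).trans (add_le_add ?_ ?_) <;> rw [abs_mul]
    · exact mul_le_mul_of_nonneg_left (hB _ (hmem hx)) (abs_nonneg _)
    · exact mul_le_mul_of_nonneg_left (hB _ hx) (abs_nonneg _)
  have hΩconst : Tendsto Ω (𝓝[<] 1) (𝓝 (Ω 0)) := by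
    refine tendsto_const_nhds.congr' ?_
    filter_upwards [Ioo_mem_nhdsLT (by norm_num : (-1 : ℝ) < 1)] with x hx
    exact eq_of_hasDerivAt_eq_zero_Ioo hΩd (by norm_num) hx
  have h0 := tendsto_nhds_unique hΩconst hΩlim
  simp only [Ω, neg_zero, ← two_mul] at h0
  exact (mul_eq_zero.1 ((mul_eq_zero.1 h0).resolve_left two_ne_zero)).resolve_left hw0

/-- This is the Wronskian `W(w, u)`; `u` fails to solve the linearized equation by
`λ (u f'(u) - (p-1) f(u))`. -/
lemma hasDerivAt_wronskian (hu : Sol1D p lam f u) (hw : Lin1D p lam f u w) {x : ℝ}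
    (hx : x ∈ Ioo (-1 : ℝ) 1) :
    HasDerivAt (fun y => (p - 1) * w y * phi p (du u y) - u y * du w y * phi' p (du u y))
      (lam * w x * (u x * deriv f (u x) - (p - 1) * f (u x))) x := by
  have h := (((hw.hasDerivAt hx).const_mul (p - 1)).mul (hu.hasDerivAt_phi_du hx)).sub
    ((hu.hasDerivAt hx).mul (hw.hasDerivAt_flux hx))
  refine (h.congr_deriv ?_).congr_of_eventuallyEq (Eventually.of_forall fun y => by
    simp only [Pi.mul_apply, Pi.sub_apply]; ring)
  linear_combination -du w x * mul_phi' p (du u x)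

lemma wronskian_pos (hlam : 0 < lam) (hconv : ∀ v > γ, 0 < deriv f v - (p - 1) * f v / v)
    (hu : Sol1D p lam f u) (hw : Lin1D p lam f u w) (hwpos : ∀ x ∈ Ioo (-1 : ℝ) 1, 0 < w x)
    {x₀ : ℝ} (hx₀ : x₀ ∈ Ioo (0 : ℝ) 1) (hdu : ∀ x ∈ Ioo (0 : ℝ) 1, du u x < 0) (hux₀ : u x₀ = γ)
    (hdu0 : du u 0 = 0) (hflux0 : phi' p (du u 0) * du w 0 = 0) :
    0 < (p - 1) * w x₀ * phi p (du u x₀) - u x₀ * du w x₀ * phi' p (du u x₀) := by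
  have hsub : Icc 0 x₀ ⊆ Ioo (-1 : ℝ) 1 := Icc_subset_Ioo (by norm_num) hx₀.2
  have hanti : StrictAntiOn u (Icc 0 1) := strictAntiOn_Icc_of_hasDerivAt_neg
    (hu.reg.continuousOn.mono (Icc_subset_Icc_left (by norm_num)))
    (fun x hx => hu.hasDerivAt ⟨by linarith [hx.1], hx.2⟩) hdu
  have hmono := strictMonoOn_Icc_of_hasDerivAt_pos
    (fun x hx => (hw.hasDerivAt_wronskian hu (hsub hx)).continuousAt.continuousWithinAt)
    (fun x hx => hw.hasDerivAt_wronskian hu (hsub (Ioo_subset_Icc_self hx))) fun x hx => by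
      have hxI := hsub (Ioo_subset_Icc_self hx)
      have hγx : γ < u x := hux₀ ▸ hanti ⟨hx.1.le, hx.2.le.trans hx₀.2.le⟩
        ⟨hx₀.1.le, hx₀.2.le⟩ hx.2
      have h := mul_pos (hu.pos x hxI) (hconv (u x) hγx)
      rw [mul_sub, mul_div_cancel₀ _ (hu.pos x hxI).ne'] at h
      exact mul_pos (mul_pos hlam (hwpos x hxI)) h
  have h0 : (p - 1) * w 0 * phi p (du u 0) - u 0 * du w 0 * phi' p (du u 0) = 0 := by
    rw [hdu0, phi_zero]
    rw [hdu0] at hflux0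
    linear_combination -u 0 * hflux0
  have h := hmono (left_mem_Icc.2 hx₀.1.le) (right_mem_Icc.2 hx₀.1.le) hx₀.1
  simp only at h
  linarith

end Lin1D

lemma Sol1D.symmetric_of_linearized_pos {p lam γ : ℝ} {f u w : ℝ → ℝ}
    (hp : 1 < p) (hlam : 0 < lam) (hf : ContDiffOn ℝ 1 f (Ici 0))
    (hs : ChangesSignAt f γ) (hu : Sol1D p lam f u) (hw : Lin1D p lam f u w)
    (hwpos : ∀ x ∈ Ioo (-1 : ℝ) 1, 0 < w x) :
    IsMaxOn u (Icc (-1) 1) 0 ∧ (∀ x ∈ Ioo (0 : ℝ) 1, du u x < 0) ∧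
      ∀ x ∈ Ioo (-1 : ℝ) 1, u (-x) = u x := by
  obtain ⟨c, hc, hmax⟩ := hu.exists_isMaxOn
  have hzero : ∀ z ∈ Ioo (-1 : ℝ) 1, du u z = 0 → z = c := fun z hz hdz =>
    hw.eq_of_du_eq_zero hp hlam hf hs hu hwpos hc hmax hz hdz
  have hneg : ∀ x ∈ Ioo c 1, du u x < 0 := fun x hx => hu.du_neg_of_gt hc hzero hx
  have hpos : ∀ x ∈ Ioo (-1) c, 0 < du u x := fun x hx => hu.du_pos_of_lt hc hzero hx
  obtain ⟨hsum, hrefl⟩ := reflect_of_hasDerivAt_eq_neg hc.1 hc.2 hu.reg.continuousOn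
    (strictMonoOn_Icc_of_hasDerivAt_pos (hu.reg.continuousOn.mono (Icc_subset_Icc_right hc.2.le))
      (fun y hy => hu.hasDerivAt ⟨hy.1, hy.2.trans hc.2⟩) hpos)
    (strictAntiOn_Icc_of_hasDerivAt_neg (hu.reg.continuousOn.mono (Icc_subset_Icc_left hc.1.le))
      (fun y hy => hu.hasDerivAt ⟨hc.1.trans hy.1, hy.2⟩) hneg)
    (hu.bcm.trans hu.bc1.symm) (fun x hx => hu.hasDerivAt hx) (fun s hs => (hpos s hs).ne')
    fun s hs x hx hsx => by
      have := hu.abs_du_eq_of_eq hp hf.continuousOn ⟨hs.1, hs.2.trans hc.2⟩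
        ⟨hc.1.trans hx.1, hx.2⟩ hsx
      rwa [abs_of_pos (hpos s hs), abs_of_neg (hneg x hx)] at this
  obtain rfl : c = 0 := by linarith
  refine ⟨hmax, hneg, fun x hx => ?_⟩
  rcases le_total 0 x with h | h
  · simpa using hrefl x ⟨h, hx.2.le⟩
  · simpa using (hrefl (-x) ⟨by linarith, by linarith [hx.1]⟩).symm

/-- Lemma 3.7: the inequality `(p-1)w(x₀)φ_p(u'(x₀)) - u(x₀)w'(x₀)φ_p'(u'(x₀)) > 0`,
and in particular `w'(x₀) < 0`. -/
theorem stmt17 (p : ℝ) (hp : 1 < p) (lam : ℝ) (hlam : 0 < lam)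
    (f : ℝ → ℝ) (hf : ContDiffOn ℝ 1 f (Set.Ici 0))
    (γ : ℝ) (hγ : 0 < γ)
    (hneg : ∀ v ∈ Set.Ioo (0:ℝ) γ, f v < 0)
    (hpos : ∀ v > γ, 0 < f v)
    (hconv : ∀ v > γ, 0 < deriv f v - (p - 1) * f v / v)
    (u : ℝ → ℝ) (hu : Sol1D p lam f u)
    (x₀ : ℝ) (hx₀ : x₀ ∈ Set.Ioo (0:ℝ) 1) (hux₀ : u x₀ = γ)
    (w : ℝ → ℝ) (hw : Lin1D p lam f u w)
    (hwpos : ∀ x ∈ Set.Ioo (-1:ℝ) 1, 0 < w x) :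
    0 < (p - 1) * w x₀ * phi p (du u x₀) - u x₀ * du w x₀ * phi' p (du u x₀) ∧
    du w x₀ < 0 := by
  have hs : ChangesSignAt f γ := ⟨hγ, hneg, hpos⟩
  obtain ⟨hmax, hdu, heven⟩ := hu.symmetric_of_linearized_pos hp hlam hf hs hw hwpos
  have hdu0 : du u 0 = 0 := hu.du_eq_zero_of_isMaxOn (by norm_num) hmax
  have hflux0 := hw.flux_zero_eq_zero hf hu (hwpos 0 (by norm_num)).ne' heven
  have hH := hw.wronskian_pos hlam hconv hu hwpos hx₀ hdu hux₀ hdu0 hflux0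
  refine ⟨hH, ?_⟩
  have hx₀' : x₀ ∈ Ioo (-1 : ℝ) 1 := ⟨by linarith [hx₀.1], hx₀.2⟩
  have hv : (p - 1) * w x₀ * phi p (du u x₀) < 0 :=
    mul_neg_of_pos_of_neg (mul_pos (by linarith) (hwpos x₀ hx₀')) (phi_neg_iff.2 (hdu x₀ hx₀))
  have hcoef : 0 < u x₀ * phi' p (du u x₀) :=
    mul_pos (hux₀ ▸ hγ) (phi'_pos hp (hdu x₀ hx₀).ne)
  by_contra! h
  nlinarith [mul_nonneg hcoef.le h]
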